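/- arXiv:1811.08218 — 3 statements merged into one kernel-verified Lean document; each statement's English description precedes it below -/
import Mathlib

section
/- Assume Im(k'·conj(ℓ)) > 0. Let μ ∈ ℝ ∖ {0} and E ∈ ℝ with E ≠ sign(ϑ⋆)·μν_F|ℓ|, and let f : ℝ → ℂ² be differentiable, square-integrable, not identically zero, and satisfy (D(μ)f)(t) = E·f(t) for all t ∈ ℝ. Then f and m₂f are linearly independent, and there exist a, b ∈ ℂ and ϑ ∈ ℂ with ϑ² = E² − μ²ν_F²|ℓ|² such that w := a·f + b·m₂f is not identically zero, square-integrable, and satisfies (D⋆w)(t) = ϑ·w(t) for all t ∈ ℝ. (Every L² eigenvalue of D(μ) other than sign(ϑ⋆)·μν_F|ℓ| arises from an eigenvalue of D⋆.) -/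
open Matrix MeasureTheory Complex
open scoped ENNReal

/-- The matrix `m₁ = (ν_F|k'|)⁻¹ [[0, ν⋆k'], [conj(ν⋆k'), 0]]`. -/
noncomputable def m1 (ν k' : ℂ) : Matrix (Fin 2) (Fin 2) ℂ :=
  (‖ν‖ * ‖k'‖)⁻¹ • !![0, ν * k'; (starRingEnd ℂ) (ν * k'), 0]

/-- The matrix `m₂ = (ν_F|ℓ|)⁻¹ [[0, ν⋆ℓ], [conj(ν⋆ℓ), 0]]`. -/
noncomputable def m2 (ν ℓ : ℂ) : Matrix (Fin 2) (Fin 2) ℂ :=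
  (‖ν‖ * ‖ℓ‖)⁻¹ • !![0, ν * ℓ; (starRingEnd ℂ) (ν * ℓ), 0]

/-- The matrix `m₃ = [[1, 0], [0, −1]]`. -/
def m3 : Matrix (Fin 2) (Fin 2) ℂ := !![1, 0; 0, -1]

/-- The Dirac operator `D(μ) = ν_F|k'| m₁ D_t + μν_F|ℓ| m₂ + ϑ⋆κ m₃`, acting pointwise on
differentiable functions `u : ℝ → ℂ²`; `D⋆ = D(0)`. -/
noncomputable def Dop (ϑstar : ℝ) (ν k' ℓ : ℂ) (κ : ℝ → ℝ) (μ : ℝ)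
    (u : ℝ → Fin 2 → ℂ) (t : ℝ) : Fin 2 → ℂ :=
  (‖ν‖ * ‖k'‖) • (m1 ν k').mulVec ((-Complex.I) • deriv u t) +
    (μ * ‖ν‖ * ‖ℓ‖) • (m2 ν ℓ).mulVec (u t) +
    (ϑstar * κ t) • m3.mulVec (u t)

lemma m2_apply (ν ℓ : ℂ) (v : Fin 2 → ℂ) :
    (m2 ν ℓ).mulVec v = ![((‖ν‖*‖ℓ‖:ℝ):ℂ)⁻¹ * ((ν*ℓ) * v 1),
      ((‖ν‖*‖ℓ‖:ℝ):ℂ)⁻¹ * ((starRingEnd ℂ) (ν*ℓ) * v 0)] := by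
  funext i
  fin_cases i <;>
    simp [m2, Matrix.mulVec, dotProduct, Fin.sum_univ_two, Complex.real_smul] <;> ring

lemma Dop_apply (ϑstar : ℝ) (ν k' ℓ : ℂ) (hν : ν ≠ 0) (hk : k' ≠ 0) (hℓ : ℓ ≠ 0)
    (κ : ℝ → ℝ) (μ : ℝ) (u : ℝ → Fin 2 → ℂ) (t : ℝ) :
    Dop ϑstar ν k' ℓ κ μ u t =
      ![-Complex.I * (ν * k') * deriv u t 1 + (μ:ℂ) * (ν * ℓ) * u t 1
          + ((ϑstar * κ t : ℝ):ℂ) * u t 0,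
        -Complex.I * ((starRingEnd ℂ) (ν * k')) * deriv u t 0
          + (μ:ℂ) * ((starRingEnd ℂ) (ν * ℓ)) * u t 0 - ((ϑstar * κ t : ℝ):ℂ) * u t 1] := by
  have a1 : ((‖ν‖ : ℝ) : ℂ) ≠ 0 := by simpa using hν
  have a2 : ((‖k'‖ : ℝ) : ℂ) ≠ 0 := by simpa using hk
  have a3 : ((‖ℓ‖ : ℝ) : ℂ) ≠ 0 := by simpa using hℓ
  funext i
  fin_cases i <;>
    simp [Dop, m1, m2, m3, Matrix.mulVec, dotProduct, Fin.sum_univ_two,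
      Complex.real_smul] <;>
    field_simp <;> ring

lemma key_id (ν k' ℓ : ℂ) (hℓ : ℓ ≠ 0)
    (horth : (k' * (starRingEnd ℂ) ℓ).re = 0)
    (hIm : 0 < (k' * (starRingEnd ℂ) ℓ).im) :
    ν * ℓ * ((‖ν‖ * ‖k'‖ : ℝ) : ℂ) = -Complex.I * (ν * k') * ((‖ν‖ * ‖ℓ‖ : ℝ) : ℂ) := by
  have hz : k' * (starRingEnd ℂ) ℓ = Complex.I * ((‖k'‖ * ‖ℓ‖ : ℝ) : ℂ) := by
    have him : (k' * (starRingEnd ℂ) ℓ).im = ‖k'‖ * ‖ℓ‖ := by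
      have h1 : ‖k' * (starRingEnd ℂ) ℓ‖ = ‖k'‖ * ‖ℓ‖ := by
        rw [norm_mul, RCLike.norm_conj]
      rw [← h1, Complex.norm_def, Complex.normSq_apply, horth]
      rw [show (0:ℝ) * 0 + (k' * (starRingEnd ℂ) ℓ).im * (k' * (starRingEnd ℂ) ℓ).im
          = (k' * (starRingEnd ℂ) ℓ).im ^ 2 by ring, Real.sqrt_sq hIm.le]
    apply Complex.ext <;> simp [horth, him]
  have hz3 : k' * ((‖ℓ‖ : ℝ) : ℂ) = Complex.I * ((‖k'‖ : ℝ) : ℂ) * ℓ := by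
    have hl0 : ((‖ℓ‖ : ℝ) : ℂ) ≠ 0 := by simpa using hℓ
    apply mul_right_cancel₀ hl0
    have hz2 := congrArg (· * ℓ) hz
    have hcj : (starRingEnd ℂ) ℓ * ℓ = ((‖ℓ‖ : ℝ) : ℂ) * ((‖ℓ‖ : ℝ) : ℂ) := by
      rw [mul_comm, Complex.mul_conj]
      push_cast [Complex.normSq_eq_norm_sq]
      ring
    push_cast at hz2 ⊢
    linear_combination hz2 - k' * hcj
  push_cast
  linear_combination (Complex.I * ν * ((‖ν‖ : ℝ) : ℂ)) * hz3
    + (ν * ℓ * ((‖ν‖:ℝ):ℂ) * ((‖k'‖:ℝ):ℂ)) * Complex.I_sq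

/-- Every `L²` eigenvalue of `D(μ)` other than `sign(ϑ⋆)·μν_F|ℓ|` arises from an `L²`
eigenvalue `ϑ` of `D⋆` with `ϑ² = E² − μ²ν_F²|ℓ|²`. -/
theorem stmt15 (ϑstar : ℝ) (hϑstar : ϑstar ≠ 0) (ν k' ℓ : ℂ)
    (hν : ν ≠ 0) (hk : k' ≠ 0) (hℓ : ℓ ≠ 0)
    (horth : (k' * (starRingEnd ℂ) ℓ).re = 0)
    (hIm : 0 < (k' * (starRingEnd ℂ) ℓ).im)
    (κ : ℝ → ℝ) (hκ : ContDiff ℝ (⊤ : ℕ∞) κ) (L : ℝ) (hL : 0 < L)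
    (hκm : ∀ t : ℝ, t ≤ -L → κ t = -1) (hκp : ∀ t : ℝ, L ≤ t → κ t = 1)
    (μ : ℝ) (hμ : μ ≠ 0) (E : ℝ)
    (hE : E ≠ (if 0 < ϑstar then (1 : ℝ) else -1) * (μ * ‖ν‖ * ‖ℓ‖))
    (f : ℝ → Fin 2 → ℂ) (hfdiff : Differentiable ℝ f)
    (hfL2 : MemLp f 2 (volume : Measure ℝ)) (hfne : f ≠ 0)
    (heig : ∀ t : ℝ, Dop ϑstar ν k' ℓ κ μ f t = (E : ℂ) • f t) :
    LinearIndependent ℂ ![f, fun t => (m2 ν ℓ).mulVec (f t)] ∧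
    ∃ a b ϑ : ℂ, ϑ ^ 2 = ((E ^ 2 - μ ^ 2 * ‖ν‖ ^ 2 * ‖ℓ‖ ^ 2 : ℝ) : ℂ) ∧
      ∀ w : ℝ → Fin 2 → ℂ,
        (∀ t : ℝ, w t = a • f t + b • (m2 ν ℓ).mulVec (f t)) →
        w ≠ 0 ∧ MemLp w 2 (volume : Measure ℝ) ∧
        ∀ t : ℝ, Dop ϑstar ν k' ℓ κ 0 w t = ϑ • w t := by
  classical
  have hn1 : (0:ℝ) < ‖ν‖ * ‖k'‖ :=
    mul_pos (norm_pos_iff.mpr hν) (norm_pos_iff.mpr hk)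
  have hn2 : (0:ℝ) < ‖ν‖ * ‖ℓ‖ :=
    mul_pos (norm_pos_iff.mpr hν) (norm_pos_iff.mpr hℓ)
  have hc1c : ((‖ν‖ * ‖k'‖ : ℝ) : ℂ) ≠ 0 := by exact_mod_cast hn1.ne'
  have hc2c : ((‖ν‖ * ‖ℓ‖ : ℝ) : ℂ) ≠ 0 := by exact_mod_cast hn2.ne'
  obtain ⟨q, hqdef⟩ : ∃ q : ℂ, q = (ν * k') / ((‖ν‖ * ‖k'‖ : ℝ) : ℂ) := ⟨_, rfl⟩
  have hu : ν * k' = q * ((‖ν‖ * ‖k'‖ : ℝ) : ℂ) := by rw [hqdef]; exact (div_mul_cancel₀ _ hc1c).symm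
  have hq : q * (starRingEnd ℂ) q = 1 := by
    have hmc : (ν * k') * (starRingEnd ℂ) (ν * k')
        = ((‖ν‖ * ‖k'‖ : ℝ) : ℂ) * ((‖ν‖ * ‖k'‖ : ℝ) : ℂ) := by
      rw [Complex.mul_conj]
      push_cast [Complex.normSq_eq_norm_sq]
      rw [norm_mul]
      push_cast
      ring
    rw [hqdef, map_div₀, Complex.conj_ofReal, div_mul_div_comm, hmc]
    exact div_self (by exact mul_ne_zero hc1c hc1c)
  have hq0 : q ≠ 0 := by
    intro h; rw [h] at hq; simp at hq
  have hqc0 : (starRingEnd ℂ) q ≠ 0 := by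
    simpa using hq0
  have hp : ν * ℓ = -Complex.I * q * ((‖ν‖ * ‖ℓ‖ : ℝ) : ℂ) := by
    have h := key_id ν k' ℓ hℓ horth hIm
    rw [hu] at h
    apply mul_right_cancel₀ hc1c
    linear_combination h
  have hpc : (starRingEnd ℂ) (ν * ℓ)
      = Complex.I * (starRingEnd ℂ) q * ((‖ν‖ * ‖ℓ‖ : ℝ) : ℂ) := by
    rw [hp, _root_.map_mul, _root_.map_mul, Complex.conj_ofReal, map_neg, Complex.conj_I]
    ring
  have huc : (starRingEnd ℂ) (ν * k') = (starRingEnd ℂ) q * ((‖ν‖ * ‖k'‖ : ℝ) : ℂ) := by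
    rw [hu, _root_.map_mul, Complex.conj_ofReal]
  have hder : ∀ (i : Fin 2) (x : ℝ), HasDerivAt (fun s => f s i) (deriv f x i) x := by
    intro i x
    exact hasDerivAt_pi.mp (hfdiff x).hasDerivAt i
  -- normalized eigen equations
  have N0 : ∀ t, -Complex.I * q * (((‖ν‖*‖k'‖:ℝ):ℂ) * deriv f t 1
      + (μ:ℂ) * ((‖ν‖*‖ℓ‖:ℝ):ℂ) * f t 1)
      = ((E:ℂ) - (ϑstar:ℂ) * ((κ t:ℝ):ℂ)) * f t 0 := by
    intro t
    have h := congrFun (heig t) 0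
    rw [Dop_apply ϑstar ν k' ℓ hν hk hℓ κ μ f t] at h
    simp only [Matrix.cons_val_zero, Pi.smul_apply, smul_eq_mul] at h
    rw [hu, hp] at h
    push_cast at h ⊢
    linear_combination h
  have N1 : ∀ t, Complex.I * (starRingEnd ℂ) q * (-((‖ν‖*‖k'‖:ℝ):ℂ) * deriv f t 0
      + (μ:ℂ) * ((‖ν‖*‖ℓ‖:ℝ):ℂ) * f t 0)
      = ((E:ℂ) + (ϑstar:ℂ) * ((κ t:ℝ):ℂ)) * f t 1 := by
    intro t
    have h := congrFun (heig t) 1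
    rw [Dop_apply ϑstar ν k' ℓ hν hk hℓ κ μ f t] at h
    simp only [Matrix.cons_val_one, Matrix.head_cons, Pi.smul_apply, smul_eq_mul] at h
    rw [huc, hpc] at h
    push_cast at h ⊢
    linear_combination h
  have ha1 : ((‖ν‖ : ℝ) : ℂ) ≠ 0 := by simpa using hν
  have ha3 : ((‖ℓ‖ : ℝ) : ℂ) ≠ 0 := by simpa using hℓ
  have ha2 : ((‖k'‖ : ℝ) : ℂ) ≠ 0 := by simpa using hk
  -- the key non-degeneracy: f and m₂ f cannot be pointwise proportional
  have key : ∀ lam : ℂ, (∀ x, (m2 ν ℓ).mulVec (f x) = lam • f x) → False := by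
    intro lam hlam
    have hA : ∀ x, -Complex.I * q * f x 1 = lam * f x 0 := by
      intro x
      have h := congrFun (hlam x) 0
      rw [m2_apply] at h
      simp only [Matrix.cons_val_zero, Pi.smul_apply, smul_eq_mul] at h
      rw [hp] at h
      rw [inv_mul_eq_div, div_eq_iff hc2c] at h
      apply mul_right_cancel₀ hc2c
      linear_combination h
    have hB : ∀ x, Complex.I * (starRingEnd ℂ) q * f x 0 = lam * f x 1 := by
      intro x
      have h := congrFun (hlam x) 1
      rw [m2_apply] at h
      simp only [Matrix.cons_val_one, Matrix.cons_val_zero, Matrix.head_cons, Pi.smul_apply, smul_eq_mul] at h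
      rw [hpc] at h
      rw [inv_mul_eq_div, div_eq_iff hc2c] at h
      apply mul_right_cancel₀ hc2c
      linear_combination h
    have hIq : Complex.I * q ≠ 0 := mul_ne_zero Complex.I_ne_zero hq0
    have hIqc : Complex.I * (starRingEnd ℂ) q ≠ 0 := mul_ne_zero Complex.I_ne_zero hqc0
    have hlam0 : lam ≠ 0 := by
      intro h0
      apply hfne
      funext x
      have e0 : f x 0 = 0 := by
        have h := hB x
        rw [h0, zero_mul] at h
        simpa [hIqc] using mul_eq_zero.mp h
      have e1 : f x 1 = 0 := by
        have h := hA x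
        have h' : (Complex.I * q) * f x 1 = 0 := by linear_combination -h - f x 0 * h0
        simpa [hIq] using mul_eq_zero.mp h'
      funext i
      fin_cases i <;> simp [e0, e1]
    obtain ⟨x₀, hx₀⟩ : ∃ x, f x 0 ≠ 0 := by
      by_contra h
      push_neg at h
      apply hfne
      funext x
      have e1 : f x 1 = 0 := by
        have hb := hB x
        rw [h x, mul_zero] at hb
        simpa [hlam0] using mul_eq_zero.mp hb.symm
      funext i
      fin_cases i <;> simp [h x, e1]
    have hf1x₀ : f x₀ 1 ≠ 0 := by
      intro h1
      have hb := hB x₀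
      rw [h1, mul_zero] at hb
      rcases mul_eq_zero.mp hb with h | h
      · exact hIqc h
      · exact hx₀ h
    have hlam2 : lam ^ 2 = 1 := by
      have h3 : lam ^ 2 * f x₀ 1 = 1 * f x₀ 1 := by
        linear_combination (-lam) * hB x₀ - Complex.I * (starRingEnd ℂ) q * hA x₀
          - f x₀ 1 * Complex.I ^ 2 * hq - f x₀ 1 * Complex.I_sq
      exact mul_right_cancel₀ hf1x₀ h3
    have hlampm : lam = 1 ∨ lam = -1 := by
      have h : (lam - 1) * (lam + 1) = 0 := by linear_combination hlam2
      rcases mul_eq_zero.mp h with h | h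
      · exact Or.inl (by linear_combination h)
      · exact Or.inr (by linear_combination h)
    have hf1 : ∀ x, f x 1 = lam * (Complex.I * (starRingEnd ℂ) q * f x 0) := by
      intro x
      linear_combination (-lam) * hB x - f x 1 * hlam2
    have hd : ∀ x, Complex.I * (starRingEnd ℂ) q * deriv f x 0 = lam * deriv f x 1 := by
      intro x
      have h1 : HasDerivAt (fun s => Complex.I * (starRingEnd ℂ) q * f s 0)
          (Complex.I * (starRingEnd ℂ) q * deriv f x 0) x := (hder 0 x).const_mul _
      have h2 : HasDerivAt (fun s => lam * f s 1) (lam * deriv f x 1) x :=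
        (hder 1 x).const_mul _
      have he : (fun s => Complex.I * (starRingEnd ℂ) q * f s 0) = fun s => lam * f s 1 :=
        funext hB
      rw [he] at h1
      exact h1.unique h2
    have hd1 : ∀ x, deriv f x 1 = lam * (Complex.I * (starRingEnd ℂ) q * deriv f x 0) := by
      intro x
      linear_combination (-lam) * hd x - deriv f x 1 * hlam2
    have hi : ∀ x, -((‖ν‖*‖k'‖:ℝ):ℂ) * deriv f x 0 + (μ:ℂ) * ((‖ν‖*‖ℓ‖:ℝ):ℂ) * f x 0
        = lam * ((E:ℂ) + (ϑstar:ℂ) * ((κ x:ℝ):ℂ)) * f x 0 := by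
      intro x
      apply mul_left_cancel₀ hIqc
      linear_combination N1 x + ((E:ℂ) + (ϑstar:ℂ) * ((κ x:ℝ):ℂ)) * hf1 x
    have hii : ∀ x, ((‖ν‖*‖k'‖:ℝ):ℂ) * deriv f x 0 + (μ:ℂ) * ((‖ν‖*‖ℓ‖:ℝ):ℂ) * f x 0
        = lam * ((E:ℂ) - (ϑstar:ℂ) * ((κ x:ℝ):ℂ)) * f x 0 := by
      intro x
      linear_combination lam * N0 x
        + Complex.I * q * lam * ((‖ν‖*‖k'‖:ℝ):ℂ) * hd1 x
        + Complex.I * q * lam * ((μ:ℂ) * ((‖ν‖*‖ℓ‖:ℝ):ℂ)) * hf1 x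
        + ((((‖ν‖*‖k'‖:ℝ):ℂ) * deriv f x 0 + (μ:ℂ) * ((‖ν‖*‖ℓ‖:ℝ):ℂ) * f x 0)
            * Complex.I ^ 2 * lam ^ 2) * hq
        + ((((‖ν‖*‖k'‖:ℝ):ℂ) * deriv f x 0 + (μ:ℂ) * ((‖ν‖*‖ℓ‖:ℝ):ℂ) * f x 0)
            * Complex.I ^ 2) * hlam2
        + (((‖ν‖*‖k'‖:ℝ):ℂ) * deriv f x 0 + (μ:ℂ) * ((‖ν‖*‖ℓ‖:ℝ):ℂ) * f x 0) * Complex.I_sq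
    have hElam : (E:ℂ) = lam * ((μ:ℂ) * ((‖ν‖*‖ℓ‖:ℝ):ℂ)) := by
      have h2 : (lam * (E:ℂ) - (μ:ℂ) * ((‖ν‖*‖ℓ‖:ℝ):ℂ)) * f x₀ 0 = 0 := by
        linear_combination (-1/2 : ℂ) * hi x₀ + (-1/2 : ℂ) * hii x₀
      have h3 : lam * (E:ℂ) = (μ:ℂ) * ((‖ν‖*‖ℓ‖:ℝ):ℂ) := by
        have h4 := (mul_eq_zero.mp h2).resolve_right hx₀
        linear_combination h4
      linear_combination lam * h3 - (E:ℂ) * hlam2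
    have hsgn : -lam * ((ϑstar:ℝ):ℂ) = ((|ϑstar|:ℝ):ℂ) := by
      rcases hlampm with h1 | h1
      · have hEr : E = μ * ‖ν‖ * ‖ℓ‖ := by
          rw [h1, one_mul] at hElam
          exact_mod_cast (by push_cast at hElam ⊢; linear_combination hElam : (E:ℂ) = ((μ * ‖ν‖ * ‖ℓ‖:ℝ):ℂ))
        have hneg : ¬ (0 < ϑstar) := by
          intro hpos
          exact hE (by rw [if_pos hpos, one_mul]; exact hEr)
        have hlt : ϑstar < 0 := lt_of_le_of_ne (not_lt.mp hneg) hϑstar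
        rw [h1, abs_of_neg hlt]
        push_cast
        ring
      · have hEr : E = -(μ * ‖ν‖ * ‖ℓ‖) := by
          rw [h1] at hElam
          exact_mod_cast (by push_cast at hElam ⊢; linear_combination hElam : (E:ℂ) = ((-(μ * ‖ν‖ * ‖ℓ‖):ℝ):ℂ))
        have hpos : 0 < ϑstar := by
          by_contra hneg
          exact hE (by rw [if_neg hneg]; linarith [hEr])
        rw [h1, abs_of_pos hpos]
        push_cast
        ring
    have hODE : ∀ x, ((‖ν‖*‖k'‖:ℝ):ℂ) * deriv f x 0
        = ((|ϑstar|:ℝ):ℂ) * ((κ x:ℝ):ℂ) * f x 0 := by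
      intro x
      linear_combination (1/2 : ℂ) * hii x - (1/2 : ℂ) * hi x + ((κ x:ℝ):ℂ) * f x 0 * hsgn
    set ρ : ℝ := |ϑstar| / (‖ν‖ * ‖k'‖) with hρdef
    have hρpos : 0 < ρ := div_pos (abs_pos.mpr hϑstar) hn1
    set Φ : ℝ → ℝ := fun y => ∫ s in (0:ℝ)..y, κ s with hΦdef
    have hΦd : ∀ x, HasDerivAt Φ (κ x) x :=
      fun x => (hκ.continuous.integral_hasStrictDerivAt 0 x).hasDerivAt
    have hd0 : ∀ x, deriv f x 0 = ((ρ * κ x : ℝ):ℂ) * f x 0 := by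
      intro x
      apply mul_left_cancel₀ hc1c
      rw [hODE x]
      have hcast : ((‖ν‖*‖k'‖:ℝ):ℂ) * ((ρ * κ x : ℝ):ℂ) = ((|ϑstar|:ℝ):ℂ) * ((κ x:ℝ):ℂ) := by
        rw [hρdef]
        push_cast
        field_simp [ha1, ha2]
      linear_combination (-(f x 0)) * hcast
    have hsol : ∀ x, f x 0 = f 0 0 * Complex.exp (((ρ * Φ x : ℝ):ℂ)) := by
      have hgd : ∀ x, HasDerivAt (fun y => f y 0 * Complex.exp (-((ρ * Φ y : ℝ):ℂ)))
          (0:ℂ) x := by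
        intro x
        have hφ : HasDerivAt (fun y => -((ρ * Φ y : ℝ):ℂ)) (-((ρ * κ x : ℝ):ℂ)) x := by
          have h1 : HasDerivAt (fun y => ρ * Φ y) (ρ * κ x) x := (hΦd x).const_mul ρ
          exact (Complex.ofRealCLM.hasFDerivAt.comp_hasDerivAt x h1).neg
        have hexp := hφ.cexp
        have hm := (hder 0 x).mul hexp
        refine hm.congr_deriv ?_
        rw [hd0 x]
        push_cast
        ring
      intro x
      have hconst := is_const_of_deriv_eq_zero
        (f := fun y => f y 0 * Complex.exp (-((ρ * Φ y : ℝ):ℂ)))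
        (fun y => (hgd y).differentiableAt) (fun y => (hgd y).deriv) x 0
      have hΦ0 : Φ 0 = 0 := intervalIntegral.integral_same
      rw [hΦ0, mul_zero] at hconst
      simp only [Complex.ofReal_zero, neg_zero, Complex.exp_zero, mul_one] at hconst
      calc f x 0 = f x 0 * (Complex.exp (-((ρ * Φ x : ℝ):ℂ))
            * Complex.exp (((ρ * Φ x : ℝ):ℂ))) := by
            rw [← Complex.exp_add]; simp
        _ = (f x 0 * Complex.exp (-((ρ * Φ x : ℝ):ℂ))) * Complex.exp (((ρ * Φ x : ℝ):ℂ)) := by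
            ring
        _ = f 0 0 * Complex.exp (((ρ * Φ x : ℝ):ℂ)) := by rw [hconst]
    have hf00 : f 0 0 ≠ 0 := fun h0 => hx₀ (by rw [hsol x₀, h0, zero_mul])
    have hΦlin : ∀ x, L ≤ x → Φ x = Φ L + (x - L) := by
      intro x hx
      have hadd : (∫ s in (0:ℝ)..L, κ s) + (∫ s in L..x, κ s) = ∫ s in (0:ℝ)..x, κ s :=
        intervalIntegral.integral_add_adjacent_intervals
          (hκ.continuous.intervalIntegrable 0 L) (hκ.continuous.intervalIntegrable L x)
      have hone : (∫ s in L..x, κ s) = x - L := by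
        rw [intervalIntegral.integral_congr (g := fun _ => (1:ℝ))
          (fun s hs => hκp s (by
            rw [Set.uIcc_of_le hx] at hs
            exact hs.1))]
        simp
      rw [hΦdef]
      simp only
      rw [← hadd, hone]
      try ring
    have hlow : ∀ x, L ≤ x → ‖f 0 0‖ * Real.exp (ρ * Φ L) ≤ ‖f x‖ := by
      intro x hx
      have h1 : ‖f x 0‖ ≤ ‖f x‖ := norm_le_pi_norm (f x) 0
      have h2 : ‖f x 0‖ = ‖f 0 0‖ * Real.exp (ρ * Φ x) := by
        rw [hsol x, norm_mul, Complex.norm_exp]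
        simp
      have h3 : Real.exp (ρ * Φ L) ≤ Real.exp (ρ * Φ x) := by
        apply Real.exp_le_exp.mpr
        have h4 := hΦlin x hx
        nlinarith [hρpos.le]
      calc ‖f 0 0‖ * Real.exp (ρ * Φ L) ≤ ‖f 0 0‖ * Real.exp (ρ * Φ x) :=
            mul_le_mul_of_nonneg_left h3 (norm_nonneg _)
        _ = ‖f x 0‖ := h2.symm
        _ ≤ ‖f x‖ := h1
    set ε : ℝ := ‖f 0 0‖ * Real.exp (ρ * Φ L) with hεdef
    have hεpos : 0 < ε := mul_pos (norm_pos_iff.mpr hf00) (Real.exp_pos _)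
    have hint : Integrable (fun x => ‖f x‖ ^ ((2:ℝ≥0∞).toReal)) volume :=
      hfL2.integrable_norm_rpow two_ne_zero ENNReal.ofNat_ne_top
    have hIOn : IntegrableOn (fun x => ‖f x‖ ^ ((2:ℝ≥0∞).toReal)) (Set.Ici L) volume :=
      hint.integrableOn
    have hconst : IntegrableOn (fun _ : ℝ => ε ^ ((2:ℝ≥0∞).toReal)) (Set.Ici L) volume := by
      apply Integrable.mono' hIOn aestronglyMeasurable_const
      rw [ae_restrict_iff' measurableSet_Ici]
      refine Filter.Eventually.of_forall (fun x hx => ?_)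
      rw [Real.norm_eq_abs, abs_of_pos (Real.rpow_pos_of_pos hεpos _)]
      exact Real.rpow_le_rpow hεpos.le (hlow x hx) ENNReal.toReal_nonneg
    rw [integrableOn_const_iff] at hconst
    rcases hconst with h | h
    · have : (0:ℝ) < ε ^ ((2:ℝ≥0∞).toReal) := Real.rpow_pos_of_pos hεpos _
      rw [enorm_eq_zero] at h
      rw [h] at this
      exact lt_irrefl _ this
    · rw [Real.volume_Ici] at h
      exact (lt_irrefl _ h).elim
  -- linear independence
  have LI : LinearIndependent ℂ ![f, fun t => (m2 ν ℓ).mulVec (f t)] := by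
    rw [LinearIndependent.pair_iff]
    intro s t hst
    by_cases ht : t = 0
    · subst ht
      refine ⟨?_, rfl⟩
      by_contra hs
      apply hfne
      funext x
      have h := congrFun hst x
      simp only [Pi.add_apply, Pi.smul_apply, Pi.zero_apply, zero_smul, add_zero] at h
      have h2 : f x = s⁻¹ • (s • f x) := by
        rw [smul_smul, inv_mul_cancel₀ hs, one_smul]
      rw [h2, h, smul_zero]
      rfl
    · exfalso
      apply key (-s / t)
      intro x
      have h := congrFun hst x
      simp only [Pi.add_apply, Pi.smul_apply, Pi.zero_apply] at h
      funext i
      have hi := congrFun h i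
      simp only [Pi.add_apply, Pi.smul_apply, Pi.zero_apply, smul_eq_mul] at hi
      simp only [Pi.smul_apply, smul_eq_mul]
      rw [div_mul_eq_mul_div, eq_div_iff ht]
      linear_combination hi
  refine ⟨LI, ?_⟩
  have hcR : ((μ * ‖ν‖ * ‖ℓ‖ : ℝ) : ℂ) ≠ 0 := by
    have : (μ * ‖ν‖ * ‖ℓ‖ : ℝ) ≠ 0 := by
      apply mul_ne_zero (mul_ne_zero hμ (norm_ne_zero_iff.mpr hν)) (norm_ne_zero_iff.mpr hℓ)
    exact_mod_cast this
  obtain ⟨ϑ, hϑ2⟩ : ∃ ϑ : ℂ, ϑ ^ 2 = ((E ^ 2 - μ ^ 2 * ‖ν‖ ^ 2 * ‖ℓ‖ ^ 2 : ℝ) : ℂ) :=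
    ⟨_, Complex.cpow_nat_inv_pow _ two_ne_zero⟩
  refine ⟨ϑ + (E:ℂ), -((μ * ‖ν‖ * ‖ℓ‖ : ℝ) : ℂ), ϑ, hϑ2, ?_⟩
  intro w hw
  have hgv : ∀ v : Fin 2 → ℂ, (m2 ν ℓ).mulVec v
      = ![-Complex.I * q * v 1, Complex.I * (starRingEnd ℂ) q * v 0] := by
    intro v
    rw [m2_apply]
    funext i
    fin_cases i
    · show ((‖ν‖*‖ℓ‖:ℝ):ℂ)⁻¹ * ((ν*ℓ) * v 1) = -Complex.I * q * v 1
      rw [hp, inv_mul_eq_div, div_eq_iff hc2c]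
      ring
    · show ((‖ν‖*‖ℓ‖:ℝ):ℂ)⁻¹ * ((starRingEnd ℂ) (ν*ℓ) * v 0)
        = Complex.I * (starRingEnd ℂ) q * v 0
      rw [hpc, inv_mul_eq_div, div_eq_iff hc2c]
      ring
  set T : (Fin 2 → ℂ) →L[ℂ] (Fin 2 → ℂ) :=
    (ϑ + (E:ℂ)) • ContinuousLinearMap.id ℂ (Fin 2 → ℂ)
      + (-((μ * ‖ν‖ * ‖ℓ‖ : ℝ) : ℂ)) • LinearMap.toContinuousLinearMap ((m2 ν ℓ).mulVecLin)
    with hTdef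
  have hTapp : ∀ v, T v = (ϑ + (E:ℂ)) • v
      + (-((μ * ‖ν‖ * ‖ℓ‖ : ℝ) : ℂ)) • (m2 ν ℓ).mulVec v := by
    intro v
    simp [hTdef, Matrix.mulVecLin_apply]
  have hwT : w = fun x => T (f x) := by
    funext x
    rw [hw x, hTapp]
  refine ⟨?_, ?_, ?_⟩
  · intro h0
    have hpair := (LinearIndependent.pair_iff.mp LI (ϑ + (E:ℂ))
        (-((μ * ‖ν‖ * ‖ℓ‖ : ℝ) : ℂ)) ?_).2
    · exact (neg_ne_zero.mpr hcR) hpair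
    · funext x
      have h1 := hw x
      rw [h0] at h1
      simp only [Pi.zero_apply] at h1
      simp only [Pi.add_apply, Pi.smul_apply, Pi.zero_apply]
      exact h1.symm
  · rw [hwT]
    exact T.comp_memLp' hfL2
  · intro t
    have hdw : HasDerivAt w (T (deriv f t)) t := by
      rw [hwT]
      exact ((T.restrictScalars ℝ).hasFDerivAt (x := f t)).comp_hasDerivAt t (hfdiff t).hasDerivAt
    have hdweq : deriv w t = (ϑ + (E:ℂ)) • deriv f t
        + (-((μ * ‖ν‖ * ‖ℓ‖ : ℝ) : ℂ)) • (m2 ν ℓ).mulVec (deriv f t) := by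
      rw [hdw.deriv, hTapp]
    rw [Dop_apply ϑstar ν k' ℓ hν hk hℓ κ 0 w t]
    funext i
    fin_cases i
    · show -Complex.I * (ν * k') * deriv w t 1 + ((0:ℝ):ℂ) * (ν * ℓ) * w t 1
          + ((ϑstar * κ t : ℝ):ℂ) * w t 0 = (ϑ • w t) 0
      rw [hdweq, hw t, hgv (f t), hgv (deriv f t), hu]
      simp only [Pi.add_apply, Pi.smul_apply, smul_eq_mul, Matrix.cons_val_zero,
        Matrix.cons_val_one, Matrix.head_cons]
      have n0 := N0 t
      have n1 := N1 t
      have hth := hϑ2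
      push_cast at n0 n1 hth ⊢
      linear_combination (ϑ + (E:ℂ)) * n0
        - ((μ:ℂ) * (‖ν‖:ℂ) * (‖ℓ‖:ℂ)) * Complex.I * q * n1
        + ((μ:ℂ) * (‖ν‖:ℂ) * (‖ℓ‖:ℂ))^2 * Complex.I^2 * f t 0 * hq
        + ((μ:ℂ) * (‖ν‖:ℂ) * (‖ℓ‖:ℂ))^2 * f t 0 * Complex.I_sq
        - f t 0 * hth
    · show -Complex.I * ((starRingEnd ℂ) (ν * k')) * deriv w t 0
          + ((0:ℝ):ℂ) * ((starRingEnd ℂ) (ν * ℓ)) * w t 0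
          - ((ϑstar * κ t : ℝ):ℂ) * w t 1 = (ϑ • w t) 1
      rw [hdweq, hw t, hgv (f t), hgv (deriv f t), huc]
      simp only [Pi.add_apply, Pi.smul_apply, smul_eq_mul, Matrix.cons_val_zero,
        Matrix.cons_val_one, Matrix.head_cons]
      have n0 := N0 t
      have n1 := N1 t
      have hth := hϑ2
      push_cast at n0 n1 hth ⊢
      linear_combination (ϑ + (E:ℂ)) * n1
        + ((μ:ℂ) * (‖ν‖:ℂ) * (‖ℓ‖:ℂ)) * Complex.I * (starRingEnd ℂ) q * n0
        + ((μ:ℂ) * (‖ν‖:ℂ) * (‖ℓ‖:ℂ))^2 * Complex.I^2 * f t 1 * hq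
        + ((μ:ℂ) * (‖ν‖:ℂ) * (‖ℓ‖:ℂ))^2 * f t 1 * Complex.I_sq
        - f t 1 * hth
end

section
/- Let κ : ℝ → ℝ be differentiable and μ ∈ ℝ. For every twice continuously differentiable u : ℝ → ℂ² and every t ∈ ℝ: (D(μ)(D(μ)u))(t) = −ν_F²|k'|²·u''(t) + (μ²ν_F²|ℓ|² + ϑ⋆²κ(t)²)·u(t) − i·ϑ⋆·κ'(t)·N·u(t), where N is the 2×2 matrix with rows (0, −ν⋆k') and (conj(ν⋆k'), 0). (The square of the Dirac operator D(μ) is a Schrödinger operator with the effective potential ϑ⋆²κ² + ϑ⋆(D_tκ)·(ν_F|k'|)m₁m₃.) -/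
open Matrix

/-! Write `D(μ) = A (-i ∂ₜ) + B + θ(t) S` with `A = ν_F|k'| m₁`, `B = μ ν_F|ℓ| m₂`,
`θ = ϑ⋆κ` and `S = m₃`. These matrices satisfy Clifford-type relations: each squares to a
scalar and any two of them anticommute (for `A` and `B` this is `Re(k' conj ℓ) = 0`).
Squaring `D(μ)`, the mixed terms therefore cancel in pairs, except the one in which `∂ₜ` falls on
the coefficient `θ`; it leaves the potential term `-i θ' A S`. -/

theorem HasDerivAt.const_mulVec {n : Type*} [Fintype n] (A : Matrix n n ℂ) {f : ℝ → n → ℂ}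
    {f' : n → ℂ} {t : ℝ} (hf : HasDerivAt f f' t) :
    HasDerivAt (fun r => A *ᵥ f r) (A *ᵥ f') t :=
  (((Matrix.mulVecLin A).restrictScalars ℝ).toContinuousLinearMap.hasFDerivAt).comp_hasDerivAt t hf

section Dirac

variable {n : Type*} [Fintype n] (A B S : Matrix n n ℂ) (θ : ℝ → ℝ)

noncomputable def diracOp (u : ℝ → n → ℂ) (t : ℝ) : n → ℂ :=
  A *ᵥ (-Complex.I • deriv u t) + B *ᵥ u t + θ t • S *ᵥ u t

variable {A B S θ}

theorem hasDerivAt_diracOp {u : ℝ → n → ℂ} {t : ℝ} (hθ : DifferentiableAt ℝ θ t)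
    (hu : DifferentiableAt ℝ u t) (hu' : DifferentiableAt ℝ (deriv u) t) :
    HasDerivAt (diracOp A B S θ u)
      (A *ᵥ (-Complex.I • deriv (deriv u) t) + B *ᵥ deriv u t +
        (θ t • S *ᵥ deriv u t + deriv θ t • S *ᵥ u t)) t :=
  ((hu'.hasDerivAt.const_smul (-Complex.I)).const_mulVec A |>.add
    (hu.hasDerivAt.const_mulVec B)).add (hθ.hasDerivAt.smul (hu.hasDerivAt.const_mulVec S))

theorem diracOp_diracOp [DecidableEq n] {α β : ℂ} (hA : A * A = α • 1) (hB : B * B = β • 1)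
    (hS : S * S = 1) (hAB : A * B + B * A = 0) (hAS : A * S + S * A = 0)
    (hBS : B * S + S * B = 0) {u : ℝ → n → ℂ} {t : ℝ} (hθ : DifferentiableAt ℝ θ t)
    (hu : DifferentiableAt ℝ u t) (hu' : DifferentiableAt ℝ (deriv u) t) :
    diracOp A B S θ (diracOp A B S θ u) t =
      -α • deriv (deriv u) t + (β + (θ t : ℂ) ^ 2) • u t -
        (Complex.I * deriv θ t) • (A * S) *ᵥ u t := by
  have vec : ∀ {M N : Matrix n n ℂ} {c : ℂ}, M * N = c • 1 → ∀ v, M *ᵥ N *ᵥ v = c • v :=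
    fun h v => by rw [mulVec_mulVec, h, smul_mulVec, one_mulVec]
  have vec0 : ∀ {M N : Matrix n n ℂ}, M * N + N * M = 0 → ∀ v, M *ᵥ N *ᵥ v + N *ᵥ M *ᵥ v = 0 :=
    fun h v => by rw [mulVec_mulVec, mulVec_mulVec, ← add_mulVec, h, zero_mulVec]
  rw [diracOp, (hasDerivAt_diracOp hθ hu hu').deriv, diracOp]
  simp only [mulVec_add, mulVec_smul, ← mulVec_mulVec]
  -- every mixed term is one half of an anticommutator, and `(-i)² = -1` in the `A²` term
  linear_combination (norm := module) Complex.I ^ 2 • vec hA (deriv (deriv u) t) + vec hB (u t)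
    + ((θ t : ℂ) ^ 2) • vec (hS.trans (one_smul ℂ 1).symm) (u t)
    - Complex.I • vec0 hAB (deriv u t) - (Complex.I * θ t) • vec0 hAS (deriv u t)
    + (θ t : ℂ) • vec0 hBS (u t) + Complex.I_sq • (α • deriv (deriv u) t)

end Dirac

noncomputable def hermOffDiag (z : ℂ) : Matrix (Fin 2) (Fin 2) ℂ :=
  !![0, z; starRingEnd ℂ z, 0]

theorem hermOffDiag_mul_add_mul (z w : ℂ) :
    hermOffDiag z * hermOffDiag w + hermOffDiag w * hermOffDiag z =
      (z * starRingEnd ℂ w + w * starRingEnd ℂ z) • 1 := by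
  simp [hermOffDiag, one_fin_two, smul_of, mul_comm, add_comm]

theorem hermOffDiag_anticomm {z w : ℂ} (h : (z * starRingEnd ℂ w).re = 0) :
    hermOffDiag z * hermOffDiag w + hermOffDiag w * hermOffDiag z = 0 := by
  have hconj : w * starRingEnd ℂ z = starRingEnd ℂ (z * starRingEnd ℂ w) := by simp [mul_comm]
  rw [hermOffDiag_mul_add_mul, hconj, Complex.add_conj, h, mul_zero, Complex.ofReal_zero,
    zero_smul]

theorem hermOffDiag_mul_self (z : ℂ) :
    hermOffDiag z * hermOffDiag z = ((‖z‖ ^ 2 : ℝ) : ℂ) • 1 := by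
  simp [hermOffDiag, one_fin_two, smul_of, Complex.mul_conj, Complex.normSq_eq_norm_sq, mul_comm]

theorem hermOffDiag_mul_m3 (z : ℂ) :
    hermOffDiag z * m3 = !![0, -z; starRingEnd ℂ z, 0] := by
  simp [hermOffDiag, m3]

theorem hermOffDiag_mul_m3_add_m3_mul (z : ℂ) : hermOffDiag z * m3 + m3 * hermOffDiag z = 0 := by
  simp [hermOffDiag, m3, ← Matrix.ext_iff, Fin.forall_fin_two]

theorem m3_mul_self : m3 * m3 = 1 := by
  simp [m3, one_fin_two]

theorem norm_smul_inv_norm_smul_hermOffDiag (z : ℂ) :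
    ‖z‖ • ‖z‖⁻¹ • hermOffDiag z = hermOffDiag z := by
  rcases eq_or_ne z 0 with rfl | hz
  · simp [hermOffDiag, ← Matrix.ext_iff, Fin.forall_fin_two]
  · exact smul_inv_smul₀ (norm_ne_zero_iff.2 hz) _

theorem Dop_eq_diracOp (ϑstar : ℝ) (ν k' ℓ : ℂ) (κ : ℝ → ℝ) (μ : ℝ) :
    Dop ϑstar ν k' ℓ κ μ =
      diracOp (hermOffDiag (ν * k')) (μ • hermOffDiag (ν * ℓ)) m3 (fun r => ϑstar * κ r) := by
  have h1 : (‖ν‖ * ‖k'‖) • m1 ν k' = hermOffDiag (ν * k') := by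
    rw [m1, ← norm_mul]
    exact norm_smul_inv_norm_smul_hermOffDiag _
  have h2 : (μ * ‖ν‖ * ‖ℓ‖) • m2 ν ℓ = μ • hermOffDiag (ν * ℓ) := by
    rw [m2, mul_assoc, ← norm_mul, mul_smul]
    exact congrArg _ (norm_smul_inv_norm_smul_hermOffDiag _)
  ext u t : 2
  rw [Dop, diracOp, ← smul_mulVec, h1, ← smul_mulVec, h2]

theorem stmt16_general (ϑstar : ℝ) (ν k' ℓ : ℂ)
    (horth : (k' * (starRingEnd ℂ) ℓ).re = 0)
    (κ : ℝ → ℝ) (hκ : Differentiable ℝ κ) (μ : ℝ)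
    (u : ℝ → Fin 2 → ℂ) (hu : ContDiff ℝ 2 u) :
    ∀ t : ℝ,
      Dop ϑstar ν k' ℓ κ μ (fun r => Dop ϑstar ν k' ℓ κ μ u r) t =
        (-(‖ν‖ ^ 2 * ‖k'‖ ^ 2)) • deriv (deriv u) t +
          (μ ^ 2 * ‖ν‖ ^ 2 * ‖ℓ‖ ^ 2 + ϑstar ^ 2 * κ t ^ 2) • u t -
          (Complex.I * ((ϑstar * deriv κ t : ℝ) : ℂ)) •
            (!![0, -(ν * k'); (starRingEnd ℂ) (ν * k'), 0]).mulVec (u t) := by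
  intro t
  have hcross : ((ν * k') * starRingEnd ℂ (ν * ℓ)).re = 0 := by
    rw [map_mul, mul_mul_mul_comm, Complex.mul_conj, Complex.re_ofReal_mul, horth, mul_zero]
  have hAB : hermOffDiag (ν * k') * (μ • hermOffDiag (ν * ℓ)) +
      μ • hermOffDiag (ν * ℓ) * hermOffDiag (ν * k') = 0 := by
    rw [mul_smul_comm, smul_mul_assoc, ← smul_add, hermOffDiag_anticomm hcross, smul_zero]
  have hBS : μ • hermOffDiag (ν * ℓ) * m3 + m3 * μ • hermOffDiag (ν * ℓ) = 0 := by
    rw [mul_smul_comm, smul_mul_assoc, ← smul_add, hermOffDiag_mul_m3_add_m3_mul, smul_zero]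
  have hBB : μ • hermOffDiag (ν * ℓ) * μ • hermOffDiag (ν * ℓ) =
      ((μ ^ 2 * ‖ν * ℓ‖ ^ 2 : ℝ) : ℂ) • 1 := by
    rw [smul_mul_smul, hermOffDiag_mul_self, ← Complex.coe_smul, smul_smul, sq]
    push_cast
    module
  rw [Dop_eq_diracOp, diracOp_diracOp (hermOffDiag_mul_self _) hBB m3_mul_self hAB
    (hermOffDiag_mul_m3_add_m3_mul _) hBS ((hκ t).const_mul ϑstar)
    (hu.differentiable two_ne_zero t) (hu.differentiable_deriv_two t),
    deriv_const_mul _ (hκ t), hermOffDiag_mul_m3]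
  simp only [← Complex.coe_smul, norm_mul]
  push_cast
  module

/-- The square of the Dirac operator `D(μ)` is a Schrödinger operator with effective
matrix potential `μ²ν_F²|ℓ|² + ϑ⋆²κ² − iϑ⋆κ'·N`. -/
theorem stmt16 (ϑstar : ℝ) (hϑstar : ϑstar ≠ 0) (ν k' ℓ : ℂ)
    (hν : ν ≠ 0) (hk : k' ≠ 0) (hℓ : ℓ ≠ 0)
    (horth : (k' * (starRingEnd ℂ) ℓ).re = 0)
    (κ : ℝ → ℝ) (hκ : Differentiable ℝ κ) (μ : ℝ)
    (u : ℝ → Fin 2 → ℂ) (hu : ContDiff ℝ 2 u) :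
    ∀ t : ℝ,
      Dop ϑstar ν k' ℓ κ μ (fun r => Dop ϑstar ν k' ℓ κ μ u r) t =
        (-(‖ν‖ ^ 2 * ‖k'‖ ^ 2)) • deriv (deriv u) t +
          (μ ^ 2 * ‖ν‖ ^ 2 * ‖ℓ‖ ^ 2 + ϑstar ^ 2 * κ t ^ 2) • u t -
          (Complex.I * ((ϑstar * deriv κ t : ℝ) : ℂ)) •
            (!![0, -(ν * k'); (starRingEnd ℂ) (ν * k'), 0]).mulVec (u t) :=
  stmt16_general ϑstar ν k' ℓ horth κ hκ μ u hu
end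

section
/- Let μ ∈ ℝ and let s ∈ {+1, −1}. For τ ∈ ℝ set S_s(τ) := ν_F|k'|τ·m₁ + μν_F|ℓ|·m₂ + s·ϑ⋆·m₃. Then for every τ ∈ ℝ the eigenvalues of S_s(τ) are exactly +√(ν_F²|k'|²τ² + μ²ν_F²|ℓ|² + ϑ⋆²) and −√(ν_F²|k'|²τ² + μ²ν_F²|ℓ|² + ϑ⋆²). Consequently, for z ∈ ℂ there exists τ ∈ ℝ such that S_s(τ) − z·I is not invertible if and only if z is real and z² ≥ ϑ_F² + μ²ν_F²|ℓ|²; that is, the union over τ ∈ ℝ of the spectra of S_s(τ) equals ℝ ∖ (−√(ϑ_F² + μ²ν_F²|ℓ|²), √(ϑ_F² + μ²ν_F²|ℓ|²)). -/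
/-!
`S_s(τ) = [[sϑ⋆, w], [conj w, -sϑ⋆]]` with `w = ν⋆(τk' + μℓ)` is traceless, so its characteristic
polynomial is `z² + det S_s(τ)`, and `-det S_s(τ) = ϑ⋆² + |w|²`. Since `k' ⊥ ℓ`, Pythagoras gives
`|w|² = ν_F²|k'|²τ² + μ²ν_F²|ℓ|²`; as `τ` ranges over `ℝ` (and `ν_F|k'| > 0`) the squared
eigenvalue sweeps out exactly `[ϑ_F² + μ²ν_F²|ℓ|², ∞)`.
-/

open Matrix

/-- The Fourier symbol `S_s(τ) = ν_F|k'|τ m₁ + μν_F|ℓ| m₂ + sϑ⋆ m₃` of the asymptotic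
Dirac operator `D_±(μ)`. -/
noncomputable def Ssym (ϑstar : ℝ) (ν k' ℓ : ℂ) (μ s τ : ℝ) :
    Matrix (Fin 2) (Fin 2) ℂ :=
  (‖ν‖ * ‖k'‖ * τ) • m1 ν k' + (μ * ‖ν‖ * ‖ℓ‖) • m2 ν ℓ + (s * ϑstar) • m3

open ComplexConjugate

theorem spectrum.mem_iff_not_isUnit_sub_smul_one {R A : Type*} [CommRing R] [Ring A]
    [Algebra R A] {r : R} {a : A} : r ∈ spectrum R a ↔ ¬IsUnit (a - r • 1) := by
  rw [spectrum.mem_iff, Algebra.algebraMap_eq_smul_one, ← neg_sub, IsUnit.neg_iff]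

theorem Matrix.mem_spectrum_iff_sq_eq_neg_det_of_trace_eq_zero {K : Type*} [Field K]
    {A : Matrix (Fin 2) (Fin 2) K} (hA : A.trace = 0) {z : K} :
    z ∈ spectrum K A ↔ z ^ 2 = -A.det := by
  rw [mem_spectrum_iff_isRoot_charpoly, charpoly_fin_two, hA, eq_neg_iff_add_eq_zero]
  simp

theorem Complex.normSq_add_of_re_mul_conj_eq_zero {z w : ℂ} (h : (z * conj w).re = 0) :
    Complex.normSq (z + w) = Complex.normSq z + Complex.normSq w := by
  rw [Complex.normSq_add, h, mul_zero, add_zero]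

theorem Complex.sq_eq_ofReal_iff {x : ℝ} (hx : 0 ≤ x) {z : ℂ} :
    z ^ 2 = x ↔ z = (√x : ℝ) ∨ z = -((√x : ℝ) : ℂ) := by
  rw [← Real.sq_sqrt hx, Complex.ofReal_pow, sq_eq_sq_iff_eq_or_eq_neg,
    Real.sqrt_sq (Real.sqrt_nonneg x)]

theorem Complex.exists_sq_eq_ofReal_mul_sq_add_iff {c d : ℝ} (hc : 0 < c) (hd : 0 ≤ d) {z : ℂ} :
    (∃ τ : ℝ, z ^ 2 = ((c * τ ^ 2 + d : ℝ) : ℂ)) ↔ z.im = 0 ∧ d ≤ z.re ^ 2 := by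
  constructor
  · rintro ⟨τ, hτ⟩
    have hQ : d ≤ c * τ ^ 2 + d := by nlinarith [sq_nonneg τ]
    rcases (Complex.sq_eq_ofReal_iff (hd.trans hQ)).1 hτ with rfl | rfl <;>
      simp [Real.sq_sqrt (hd.trans hQ), hQ]
  · rintro ⟨him, hre⟩
    refine ⟨√((z.re ^ 2 - d) / c), ?_⟩
    rw [Real.sq_sqrt (div_nonneg (by linarith) hc.le), mul_div_cancel₀ _ hc.ne', sub_add_cancel,
      ← Complex.re_add_im z, him]
    simp

theorem Complex.mem_image_ofReal_sqrt_le_abs_iff {d : ℝ} {z : ℂ} :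
    z ∈ (fun x : ℝ => (x : ℂ)) '' {x : ℝ | √d ≤ |x|} ↔ z.im = 0 ∧ d ≤ z.re ^ 2 := by
  simp only [Set.mem_image, Set.mem_ofPred_eq, Real.sqrt_le_left (abs_nonneg _), sq_abs]
  constructor
  · rintro ⟨x, hx, rfl⟩
    simpa using hx
  · rintro ⟨him, hre⟩
    exact ⟨z.re, hre, Complex.ext rfl him.symm⟩

theorem Matrix.det_fin_two_traceless_hermitian (a : ℝ) (w : ℂ) :
    !![(a : ℂ), w; conj w, -a].det = -((a ^ 2 + Complex.normSq w : ℝ) : ℂ) := by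
  rw [det_fin_two_of, Complex.mul_conj]
  push_cast
  ring

theorem norm_mul_smul_inv_norm_smul (u : ℂ) (τ : ℝ) :
    (‖u‖ * τ) • (‖u‖⁻¹ • !![0, u; conj u, 0]) = τ • !![0, u; conj u, 0] := by
  rcases eq_or_ne u 0 with rfl | hu
  -- `‖0‖⁻¹ = 0` is junk, but the matrix vanishes too
  · have h0 : (!![0, 0; 0, 0] : Matrix (Fin 2) (Fin 2) ℂ) = 0 := Matrix.etaExpand_eq 0
    simp [h0]
  · rw [smul_smul, mul_right_comm, mul_inv_cancel₀ (norm_ne_zero_iff.2 hu), one_mul]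

section Ssym

variable (ϑ : ℝ) (ν k' ℓ : ℂ) (μ s τ : ℝ)

theorem Ssym_eq :
    Ssym ϑ ν k' ℓ μ s τ =
      !![((s * ϑ : ℝ) : ℂ), ν * (τ * k' + μ * ℓ);
        conj (ν * (τ * k' + μ * ℓ)), -((s * ϑ : ℝ) : ℂ)] := by
  rw [Ssym, m1, m2, ← norm_mul, mul_assoc μ, mul_comm μ, ← norm_mul, norm_mul_smul_inv_norm_smul,
    norm_mul_smul_inv_norm_smul]
  ext i j
  fin_cases i <;> fin_cases j <;> simp [m3, Complex.real_smul] <;> ring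

theorem trace_Ssym : (Ssym ϑ ν k' ℓ μ s τ).trace = 0 := by
  simp [Ssym_eq, trace_fin_two]

variable {k' ℓ s}

theorem neg_det_Ssym (horth : (k' * conj ℓ).re = 0) (hs : s ^ 2 = 1) :
    -(Ssym ϑ ν k' ℓ μ s τ).det =
      ((‖ν‖ ^ 2 * ‖k'‖ ^ 2 * τ ^ 2 + μ ^ 2 * ‖ν‖ ^ 2 * ‖ℓ‖ ^ 2 + ϑ ^ 2 : ℝ) : ℂ) := by
  have horth' : (τ * k' * conj (μ * ℓ)).re = 0 := by
    rw [map_mul, Complex.conj_ofReal, mul_mul_mul_comm, ← Complex.ofReal_mul, Complex.re_ofReal_mul,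
      horth, mul_zero]
  rw [Ssym_eq, Matrix.det_fin_two_traceless_hermitian, neg_neg, Complex.normSq_mul,
    Complex.normSq_add_of_re_mul_conj_eq_zero horth']
  simp only [Complex.normSq_eq_norm_sq, norm_mul, Complex.norm_real, Real.norm_eq_abs, mul_pow,
    sq_abs]
  congr 1
  linear_combination ϑ ^ 2 * hs

theorem mem_spectrum_Ssym_iff (horth : (k' * conj ℓ).re = 0) (hs : s ^ 2 = 1) {z : ℂ} :
    z ∈ spectrum ℂ (Ssym ϑ ν k' ℓ μ s τ) ↔
      z ^ 2 = ((‖ν‖ ^ 2 * ‖k'‖ ^ 2 * τ ^ 2 + μ ^ 2 * ‖ν‖ ^ 2 * ‖ℓ‖ ^ 2 + ϑ ^ 2 : ℝ) : ℂ) := by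
  rw [Matrix.mem_spectrum_iff_sq_eq_neg_det_of_trace_eq_zero (trace_Ssym ..),
    neg_det_Ssym _ _ _ _ horth hs]

end Ssym

theorem stmt19_general (ϑstar : ℝ) (ν k' ℓ : ℂ)
    (hν : ν ≠ 0) (hk : k' ≠ 0)
    (horth : (k' * (starRingEnd ℂ) ℓ).re = 0)
    (μ : ℝ) (s : ℝ) (hs : s = 1 ∨ s = -1) :
    (∀ τ : ℝ, spectrum ℂ (Ssym ϑstar ν k' ℓ μ s τ) =
      {(Real.sqrt (‖ν‖ ^ 2 * ‖k'‖ ^ 2 * τ ^ 2 + μ ^ 2 * ‖ν‖ ^ 2 * ‖ℓ‖ ^ 2 + ϑstar ^ 2) : ℂ),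
       -(Real.sqrt (‖ν‖ ^ 2 * ‖k'‖ ^ 2 * τ ^ 2 + μ ^ 2 * ‖ν‖ ^ 2 * ‖ℓ‖ ^ 2 + ϑstar ^ 2) : ℂ)}) ∧
    (∀ z : ℂ,
      (∃ τ : ℝ, ¬IsUnit (Ssym ϑstar ν k' ℓ μ s τ - z • (1 : Matrix (Fin 2) (Fin 2) ℂ))) ↔
      (z.im = 0 ∧ |ϑstar| ^ 2 + μ ^ 2 * ‖ν‖ ^ 2 * ‖ℓ‖ ^ 2 ≤ z.re ^ 2)) ∧
    (⋃ τ : ℝ, spectrum ℂ (Ssym ϑstar ν k' ℓ μ s τ)) =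
      (fun x : ℝ => (x : ℂ)) ''
        {x : ℝ | Real.sqrt (|ϑstar| ^ 2 + μ ^ 2 * ‖ν‖ ^ 2 * ‖ℓ‖ ^ 2) ≤ |x|} := by
  have hs2 : s ^ 2 = 1 := by rcases hs with rfl | rfl <;> norm_num
  have hc : 0 < ‖ν‖ ^ 2 * ‖k'‖ ^ 2 := by
    have := norm_pos_iff.2 hν
    have := norm_pos_iff.2 hk
    positivity
  have hmem := fun τ z => mem_spectrum_Ssym_iff ϑstar ν μ τ horth hs2 (z := z)
  have hunion : ∀ z : ℂ, (∃ τ, z ∈ spectrum ℂ (Ssym ϑstar ν k' ℓ μ s τ)) ↔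
      z.im = 0 ∧ |ϑstar| ^ 2 + μ ^ 2 * ‖ν‖ ^ 2 * ‖ℓ‖ ^ 2 ≤ z.re ^ 2 := by
    intro z
    simp_rw [hmem, add_assoc, sq_abs, add_comm (ϑstar ^ 2)]
    exact Complex.exists_sq_eq_ofReal_mul_sq_add_iff hc (by positivity)
  refine ⟨fun τ => ?_, fun z => ?_, ?_⟩
  · ext z
    rw [hmem, Complex.sq_eq_ofReal_iff (by positivity)]
    rfl
  · simpa only [spectrum.mem_iff_not_isUnit_sub_smul_one] using hunion z
  · ext z
    rw [Set.mem_iUnion, hunion, Complex.mem_image_ofReal_sqrt_le_abs_iff]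

/-- The essential spectrum of the asymptotic Dirac operators: eigenvalues of the symbol
`S_s(τ)` and their union over `τ ∈ ℝ`. -/
theorem stmt19 (ϑstar : ℝ) (hϑ : ϑstar ≠ 0) (ν k' ℓ : ℂ)
    (hν : ν ≠ 0) (hk : k' ≠ 0) (hℓ : ℓ ≠ 0)
    (horth : (k' * (starRingEnd ℂ) ℓ).re = 0)
    (μ : ℝ) (s : ℝ) (hs : s = 1 ∨ s = -1) :
    (∀ τ : ℝ, spectrum ℂ (Ssym ϑstar ν k' ℓ μ s τ) =
      {(Real.sqrt (‖ν‖ ^ 2 * ‖k'‖ ^ 2 * τ ^ 2 + μ ^ 2 * ‖ν‖ ^ 2 * ‖ℓ‖ ^ 2 + ϑstar ^ 2) : ℂ),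
       -(Real.sqrt (‖ν‖ ^ 2 * ‖k'‖ ^ 2 * τ ^ 2 + μ ^ 2 * ‖ν‖ ^ 2 * ‖ℓ‖ ^ 2 + ϑstar ^ 2) : ℂ)}) ∧
    (∀ z : ℂ,
      (∃ τ : ℝ, ¬IsUnit (Ssym ϑstar ν k' ℓ μ s τ - z • (1 : Matrix (Fin 2) (Fin 2) ℂ))) ↔
      (z.im = 0 ∧ |ϑstar| ^ 2 + μ ^ 2 * ‖ν‖ ^ 2 * ‖ℓ‖ ^ 2 ≤ z.re ^ 2)) ∧
    (⋃ τ : ℝ, spectrum ℂ (Ssym ϑstar ν k' ℓ μ s τ)) =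
      (fun x : ℝ => (x : ℂ)) ''
        {x : ℝ | Real.sqrt (|ϑstar| ^ 2 + μ ^ 2 * ‖ν‖ ^ 2 * ‖ℓ‖ ^ 2) ≤ |x|} :=
  stmt19_general ϑstar ν k' ℓ hν hk horth μ s hs
end
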